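/- Let X be a real Banach space and F ⊆ X** a finite-dimensional subspace whose pre-annihilator F₀ ⊆ X* is weak-star closed, and set V = (F₀)₀ ⊆ X. Then λ(F, X**) ≤ λ(V, X); more precisely, for every closed subspace U ⊆ X with X = V ⊕ U, the norm of the projection of X onto V along U equals the norm of a projection of X** onto F, whence every projection of X onto V gives rise to a projection of X** onto F of the same norm. -/

import Mathlib

open NormedSpace

noncomputable section

/-- Helper instance (as `NormedSpace.Dual` had in the older Mathlib) so that instances on the
bidual are found through the norm structure. -/
instance strongDualSeminormedAddCommGroupReal {E : Type*} [SeminormedAddCommGroup E]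
    [NormedSpace ℝ E] : SeminormedAddCommGroup (StrongDual ℝ E) := inferInstance

/-- Helper instance (as `NormedSpace.Dual` had in the older Mathlib). -/
instance strongDualNormedSpaceReal {E : Type*} [SeminormedAddCommGroup E]
    [NormedSpace ℝ E] : NormedSpace ℝ (StrongDual ℝ E) := inferInstance

/-- The annihilator of a subspace `W ⊆ E` in the continuous dual `E*`. -/
def ann {E : Type*} [NormedAddCommGroup E] [NormedSpace ℝ E]
    (W : Submodule ℝ E) : Submodule ℝ (StrongDual ℝ E) where
  carrier := {ℓ | ∀ w ∈ W, ℓ w = 0}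
  add_mem' := by
    intro a b ha hb w hw
    simp [ha w hw, hb w hw]
  zero_mem' := by
    intro w hw
    simp
  smul_mem' := by
    intro c ℓ hℓ w hw
    simp [hℓ w hw]

/-- The pre-annihilator of a subspace `H ⊆ E*` in `E`. -/
def preAnn {E : Type*} [NormedAddCommGroup E] [NormedSpace ℝ E]
    (H : Submodule ℝ (StrongDual ℝ E)) : Submodule ℝ E where
  carrier := {x | ∀ ℓ ∈ H, ℓ x = 0}
  add_mem' := by
    intro a b ha hb ℓ hℓ
    simp [ha ℓ hℓ, hb ℓ hℓ]
  zero_mem' := by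
    intro ℓ hℓ
    simp
  smul_mem' := by
    intro c x hx ℓ hℓ
    simp [hx ℓ hℓ]

/-- A subspace of the continuous dual is weak-star closed if its image in `WeakDual ℝ E`
(the dual with the topology of pointwise convergence on `E`) is closed. -/
def IsWeakStarClosed {E : Type*} [NormedAddCommGroup E] [NormedSpace ℝ E]
    (H : Submodule ℝ (StrongDual ℝ E)) : Prop :=
  IsClosed (StrongDual.toWeakDual '' (H : Set (StrongDual ℝ E)))

/-- The relative projection constant of a subspace `W` of a normed space `Y`:
the infimum of the operator norms of continuous linear projections of `Y` onto `W`. -/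
def relProjConst {Y : Type*} [NormedAddCommGroup Y] [NormedSpace ℝ Y]
    (W : Submodule ℝ Y) : ℝ :=
  sInf {c | ∃ P : Y →L[ℝ] Y, P.comp P = P ∧ LinearMap.range (P : Y →ₗ[ℝ] Y) = W ∧ ‖P‖ = c}

end

/-!
Hahn–Banach separation in the weak-star topology, whose continuous functionals are evaluations at
points of `X`, shows `(H₀)^⊥ = H` for every weak-star closed `H ⊆ X*` (`^⊥` is `ann`);
finite-dimensional subspaces are weak-star closed. Hence `V^⊥ = F₀` and `V^⊥⊥ = (F₀)^⊥ = F`.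
With `J : X → X**` the canonical embedding, `J(V) ⊆ V^⊥⊥`, so `V` is finite-dimensional, `J(V)`
is weak-star closed in `X**`, and `V^⊥⊥ = J(V)`.
For a projection `Q` onto `V`, the biadjoint `Q**` is a projection with
`J(V) ⊆ range Q** ⊆ V^⊥⊥ = F`, and `‖Q**‖ = ‖Q‖` because `Q** ∘ J = J ∘ Q` with `J` isometric.
-/

theorem LinearMap.eq_zero_of_forall_lt {M : Type*} [AddCommGroup M] [Module ℝ M]
    (f : M →ₗ[ℝ] ℝ) {p : Submodule ℝ M} {u : ℝ} (hu : ∀ a ∈ p, f a < u) {a : M} (ha : a ∈ p) :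
    f a = 0 := by
  by_contra hfa
  have h := hu ((u / f a) • a) (p.smul_mem _ ha)
  rw [map_smul, smul_eq_mul, div_mul_cancel₀ u hfa] at h
  exact lt_irrefl u h

section Annihilators

variable {E : Type*} [NormedAddCommGroup E] [NormedSpace ℝ E]

theorem le_ann_preAnn (H : Submodule ℝ (StrongDual ℝ E)) : H ≤ ann (preAnn H) :=
  fun ℓ hℓ _ hx => hx ℓ hℓ

theorem IsWeakStarClosed.ann_preAnn_le {H : Submodule ℝ (StrongDual ℝ E)}
    (hH : IsWeakStarClosed H) : ann (preAnn H) ≤ H := by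
  have : LocallyConvexSpace ℝ (WeakDual ℝ E) := WeakBilin.locallyConvexSpace
  intro ℓ hℓ
  by_contra hℓH
  let S := H.map (StrongDual.toWeakDual (𝕜 := ℝ) (E := E)).toLinearMap
  have hSc : IsClosed (S : Set (WeakDual ℝ E)) := by rw [Submodule.map_coe]; exact hH
  have hℓS : StrongDual.toWeakDual ℓ ∉ (S : Set (WeakDual ℝ E)) := by simpa [S] using hℓH
  obtain ⟨φ, u, hφS, hφℓ⟩ := geometric_hahn_banach_closed_point S.convex hSc hℓS
  have hu : 0 < u := by simpa using hφS 0 S.zero_mem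
  have hφH : ∀ m ∈ H, φ (StrongDual.toWeakDual m) = 0 := fun m hm =>
    φ.toLinearMap.eq_zero_of_forall_lt hφS (Submodule.mem_map_of_mem hm)
  obtain ⟨x, rfl⟩ := LinearMap.dualEmbedding_surjective (topDualPairing ℝ E) φ
  have : ℓ x = 0 := hℓ x hφH
  change u < ℓ x at hφℓ
  linarith

theorem IsWeakStarClosed.ann_preAnn_eq {H : Submodule ℝ (StrongDual ℝ E)}
    (hH : IsWeakStarClosed H) : ann (preAnn H) = H :=
  hH.ann_preAnn_le.antisymm (le_ann_preAnn H)

theorem isWeakStarClosed_of_finiteDimensional (H : Submodule ℝ (StrongDual ℝ E))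
    [FiniteDimensional ℝ H] : IsWeakStarClosed H := by
  let S := H.map (StrongDual.toWeakDual (𝕜 := ℝ) (E := E)).toLinearMap
  unfold IsWeakStarClosed
  simpa [S] using S.closed_of_finiteDimensional

theorem map_inclusionInDoubleDual_le_ann_ann (V : Submodule ℝ E) :
    V.map (inclusionInDoubleDual ℝ E).toLinearMap ≤ ann (ann V) := by
  rintro _ ⟨x, hx, rfl⟩ ℓ hℓ
  exact hℓ x hx

theorem preAnn_map_inclusionInDoubleDual (V : Submodule ℝ E) :
    preAnn (V.map (inclusionInDoubleDual ℝ E).toLinearMap) = ann V := by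
  ext ℓ
  simp [preAnn, ann]

theorem ann_ann_eq_map_inclusionInDoubleDual (V : Submodule ℝ E) [FiniteDimensional ℝ V] :
    ann (ann V) = V.map (inclusionInDoubleDual ℝ E).toLinearMap := by
  rw [← preAnn_map_inclusionInDoubleDual V]
  exact (isWeakStarClosed_of_finiteDimensional (V.map _)).ann_preAnn_eq

theorem finiteDimensional_of_finiteDimensional_ann_ann (V : Submodule ℝ E)
    [FiniteDimensional ℝ (ann (ann V))] : FiniteDimensional ℝ V :=
  have : FiniteDimensional ℝ (V.map (inclusionInDoubleDual ℝ E).toLinearMap) :=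
    Submodule.finiteDimensional_of_le (map_inclusionInDoubleDual_le_ann_ann V)
  .equiv (Submodule.equivMapOfInjective (inclusionInDoubleDual ℝ E).toLinearMap
    (inclusionInDoubleDualLi ℝ).injective V).symm

end Annihilators

namespace ContinuousLinearMap

variable {X Y Z : Type*} [NormedAddCommGroup X] [NormedSpace ℝ X]
  [NormedAddCommGroup Y] [NormedSpace ℝ Y] [NormedAddCommGroup Z] [NormedSpace ℝ Z]

noncomputable def dualMap (T : X →L[ℝ] Y) : StrongDual ℝ Y →L[ℝ] StrongDual ℝ X :=
  (compL ℝ X Y ℝ).flip T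

@[simp]
theorem dualMap_apply (T : X →L[ℝ] Y) (ℓ : StrongDual ℝ Y) : T.dualMap ℓ = ℓ.comp T := rfl

theorem dualMap_comp (S : Y →L[ℝ] Z) (T : X →L[ℝ] Y) :
    (S.comp T).dualMap = T.dualMap.comp S.dualMap := rfl

theorem norm_dualMap_le (T : X →L[ℝ] Y) : ‖T.dualMap‖ ≤ ‖T‖ :=
  opNorm_le_bound _ (norm_nonneg T) fun ℓ => (opNorm_comp_le ℓ T).trans_eq (mul_comm _ _)

theorem dualMap_dualMap_inclusionInDoubleDual (T : X →L[ℝ] Y) (x : X) :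
    T.dualMap.dualMap (inclusionInDoubleDual ℝ X x) = inclusionInDoubleDual ℝ Y (T x) := rfl

theorem norm_dualMap_dualMap (T : X →L[ℝ] Y) : ‖T.dualMap.dualMap‖ = ‖T‖ := by
  refine (T.dualMap.norm_dualMap_le.trans T.norm_dualMap_le).antisymm ?_
  refine opNorm_le_bound _ (norm_nonneg _) fun x => ?_
  calc ‖T x‖ = ‖inclusionInDoubleDual ℝ Y (T x)‖ := ((inclusionInDoubleDualLi ℝ).norm_map _).symm
    _ ≤ ‖T.dualMap.dualMap‖ * ‖inclusionInDoubleDual ℝ X x‖ := by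
      rw [← dualMap_dualMap_inclusionInDoubleDual]
      exact le_opNorm _ _
    _ = ‖T.dualMap.dualMap‖ * ‖x‖ := congrArg _ ((inclusionInDoubleDualLi ℝ).norm_map x)

theorem range_dualMap_dualMap_le_ann_ann (T : X →L[ℝ] Y) :
    LinearMap.range T.dualMap.dualMap.toLinearMap ≤ ann (ann (LinearMap.range T.toLinearMap)) := by
  rintro _ ⟨f, rfl⟩ ℓ hℓ
  have hℓT : ℓ.comp T = 0 := ext fun x => hℓ (T x) ⟨x, rfl⟩
  simp [hℓT]

theorem map_inclusionInDoubleDual_range_le_range_dualMap_dualMap (T : X →L[ℝ] Y) :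
    (LinearMap.range T.toLinearMap).map (inclusionInDoubleDual ℝ Y).toLinearMap ≤
      LinearMap.range T.dualMap.dualMap.toLinearMap := by
  rintro _ ⟨_, ⟨x, rfl⟩, rfl⟩
  exact ⟨inclusionInDoubleDual ℝ X x, rfl⟩

theorem range_dualMap_dualMap_of_finiteDimensional (T : X →L[ℝ] Y)
    [FiniteDimensional ℝ (LinearMap.range T.toLinearMap)] :
    LinearMap.range T.dualMap.dualMap.toLinearMap =
      (LinearMap.range T.toLinearMap).map (inclusionInDoubleDual ℝ Y).toLinearMap :=
  (T.range_dualMap_dualMap_le_ann_ann.trans_eq (ann_ann_eq_map_inclusionInDoubleDual _)).antisymm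
    T.map_inclusionInDoubleDual_range_le_range_dualMap_dualMap

end ContinuousLinearMap

theorem Submodule.ClosedComplemented.exists_idempotent_range_eq {R M : Type*} [Ring R]
    [TopologicalSpace M] [AddCommGroup M] [Module R M] {p : Submodule R M}
    (hp : p.ClosedComplemented) :
    ∃ Q : M →L[R] M, Q.comp Q = Q ∧ LinearMap.range Q.toLinearMap = p := by
  obtain ⟨f, hf⟩ := hp
  refine ⟨p.subtypeL.comp f, ?_, ?_⟩
  · ext x
    simp [hf]
  · rw [ContinuousLinearMap.toLinearMap_comp, LinearMap.range_comp,
      LinearMap.range_eq_of_proj (f := f.toLinearMap) hf]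
    exact p.map_subtype_top

theorem relProjConst_le_relProjConst {Y Z : Type*} [NormedAddCommGroup Y] [NormedSpace ℝ Y]
    [NormedAddCommGroup Z] [NormedSpace ℝ Z] {W : Submodule ℝ Y} {W' : Submodule ℝ Z}
    (hW' : ∃ Q : Z →L[ℝ] Z, Q.comp Q = Q ∧ LinearMap.range Q.toLinearMap = W')
    (h : ∀ Q : Z →L[ℝ] Z, Q.comp Q = Q → LinearMap.range Q.toLinearMap = W' →
      ∃ P : Y →L[ℝ] Y, P.comp P = P ∧ LinearMap.range P.toLinearMap = W ∧ ‖P‖ = ‖Q‖) :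
    relProjConst W ≤ relProjConst W' := by
  obtain ⟨Q, hQ, hQW⟩ := hW'
  refine csInf_le_csInf ⟨0, ?_⟩ ⟨‖Q‖, Q, hQ, hQW, rfl⟩ ?_
  · rintro _ ⟨P, -, -, rfl⟩
    exact norm_nonneg P
  · rintro _ ⟨Q, hQ, hQW, rfl⟩
    exact h Q hQ hQW

theorem relProjConst_bidual_le_general (X : Type*) [NormedAddCommGroup X]
    [NormedSpace ℝ X]
    (F : Submodule ℝ (StrongDual ℝ (StrongDual ℝ X)))
    (hFfd : FiniteDimensional ℝ F)
    (hF₀ : IsWeakStarClosed (preAnn F)) :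
    relProjConst (Y := StrongDual ℝ (StrongDual ℝ X)) F ≤ relProjConst (Y := X) (preAnn (preAnn F)) ∧
      ∀ Q : X →L[ℝ] X, Q.comp Q = Q → LinearMap.range (Q : X →ₗ[ℝ] X) = preAnn (preAnn F) →
        ∃ P : StrongDual ℝ (StrongDual ℝ X) →L[ℝ] StrongDual ℝ (StrongDual ℝ X),
          P.comp P = P ∧ LinearMap.range (P : StrongDual ℝ (StrongDual ℝ X) →ₗ[ℝ] StrongDual ℝ (StrongDual ℝ X)) = F ∧ ‖P‖ = ‖Q‖ := by
  set V := preAnn (preAnn F)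
  have hF : ann (ann V) = F := by
    rw [hF₀.ann_preAnn_eq, (isWeakStarClosed_of_finiteDimensional F).ann_preAnn_eq]
  have : FiniteDimensional ℝ (ann (ann V)) := hF ▸ hFfd
  have : FiniteDimensional ℝ V := finiteDimensional_of_finiteDimensional_ann_ann V
  have hJV : V.map (inclusionInDoubleDual ℝ X).toLinearMap = F :=
    (ann_ann_eq_map_inclusionInDoubleDual V).symm.trans hF
  have lift (Q : X →L[ℝ] X) (hQ : Q.comp Q = Q) (hQV : LinearMap.range Q.toLinearMap = V) :
      ∃ P : StrongDual ℝ (StrongDual ℝ X) →L[ℝ] StrongDual ℝ (StrongDual ℝ X),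
        P.comp P = P ∧ LinearMap.range P.toLinearMap = F ∧ ‖P‖ = ‖Q‖ := by
    have : FiniteDimensional ℝ (LinearMap.range Q.toLinearMap) := hQV ▸ this
    refine ⟨Q.dualMap.dualMap, ?_, ?_, Q.norm_dualMap_dualMap⟩
    · rw [← ContinuousLinearMap.dualMap_comp, ← ContinuousLinearMap.dualMap_comp, hQ]
    · rw [Q.range_dualMap_dualMap_of_finiteDimensional, hQV, hJV]
  exact ⟨relProjConst_le_relProjConst
    (Submodule.ClosedComplemented.of_finiteDimensional V).exists_idempotent_range_eq lift, lift⟩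

/-- If `F ⊆ X**` is finite-dimensional with weak-star closed pre-annihilator and
`V = (F₀)₀`, then `λ(F, X**) ≤ λ(V, X)`; indeed every projection of `X` onto
`V` gives rise to a projection of `X**` onto `F` of the same norm. -/
theorem relProjConst_bidual_le (X : Type*) [NormedAddCommGroup X]
    [NormedSpace ℝ X] [CompleteSpace X]
    (F : Submodule ℝ (StrongDual ℝ (StrongDual ℝ X)))
    (hFfd : FiniteDimensional ℝ F)
    (hF₀ : IsWeakStarClosed (preAnn F)) :
    relProjConst (Y := StrongDual ℝ (StrongDual ℝ X)) F ≤ relProjConst (Y := X) (preAnn (preAnn F)) ∧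
      ∀ Q : X →L[ℝ] X, Q.comp Q = Q → LinearMap.range (Q : X →ₗ[ℝ] X) = preAnn (preAnn F) →
        ∃ P : StrongDual ℝ (StrongDual ℝ X) →L[ℝ] StrongDual ℝ (StrongDual ℝ X),
          P.comp P = P ∧ LinearMap.range (P : StrongDual ℝ (StrongDual ℝ X) →ₗ[ℝ] StrongDual ℝ (StrongDual ℝ X)) = F ∧ ‖P‖ = ‖Q‖ :=
  relProjConst_bidual_le_general X F hFfd hF₀
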